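/- The congruence subgroup Γ₁(3) = { [[a,b],[c,d]] ∈ SL₂(ℤ) : c ≡ 0 mod 3 and a ≡ d ≡ 1 mod 3 } is generated by the two matrices A = [[1,0],[-3,1]] and B = [[1,1],[0,1]]. -/
import Mathlib


open Matrix

/-- The matrix `A = [[1,0],[-3,1]]` as an element of `SL(2, ℤ)`. -/
def A₃ : Matrix.SpecialLinearGroup (Fin 2) ℤ :=
  ⟨!![1, 0; -3, 1], by norm_num [Matrix.det_fin_two_of]⟩

/-- The matrix `B = [[1,1],[0,1]]` as an element of `SL(2, ℤ)`. -/
def B₃ : Matrix.SpecialLinearGroup (Fin 2) ℤ :=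
  ⟨!![1, 1; 0, 1], by norm_num [Matrix.det_fin_two_of]⟩

lemma coe_A_pow (n : ℕ) :
    ((A₃ ^ n : Matrix.SpecialLinearGroup (Fin 2) ℤ) : Matrix (Fin 2) (Fin 2) ℤ)
      = !![1, 0; -3 * (n : ℤ), 1] := by
  induction n with
  | zero => simp [Matrix.one_fin_two]
  | succ n ih =>
    rw [pow_succ, Matrix.SpecialLinearGroup.coe_mul, ih]
    ext i j
    fin_cases i <;> fin_cases j <;>
      simp [A₃, Matrix.mul_apply, Fin.sum_univ_two] <;> push_cast <;> ring

lemma coe_A_zpow (n : ℤ) :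
    ((A₃ ^ n : Matrix.SpecialLinearGroup (Fin 2) ℤ) : Matrix (Fin 2) (Fin 2) ℤ)
      = !![1, 0; -3 * n, 1] := by
  obtain ⟨m, rfl | rfl⟩ := Int.eq_nat_or_neg n
  · rw [zpow_natCast, coe_A_pow]
  · rw [_root_.zpow_neg, zpow_natCast, Matrix.SpecialLinearGroup.SL2_inv_expl]
    have h := coe_A_pow m
    rw [Matrix.SpecialLinearGroup.coe_pow] at h
    ext i j
    fin_cases i <;> fin_cases j <;> simp [h] <;> push_cast <;> ring

lemma coe_B_pow (n : ℕ) :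
    ((B₃ ^ n : Matrix.SpecialLinearGroup (Fin 2) ℤ) : Matrix (Fin 2) (Fin 2) ℤ)
      = !![1, (n : ℤ); 0, 1] := by
  induction n with
  | zero => simp [Matrix.one_fin_two]
  | succ n ih =>
    rw [pow_succ, Matrix.SpecialLinearGroup.coe_mul, ih]
    ext i j
    fin_cases i <;> fin_cases j <;>
      simp [B₃, Matrix.mul_apply, Fin.sum_univ_two] <;> push_cast <;> ring

lemma coe_B_zpow (n : ℤ) :
    ((B₃ ^ n : Matrix.SpecialLinearGroup (Fin 2) ℤ) : Matrix (Fin 2) (Fin 2) ℤ)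
      = !![1, n; 0, 1] := by
  obtain ⟨m, rfl | rfl⟩ := Int.eq_nat_or_neg n
  · rw [zpow_natCast, coe_B_pow]
  · rw [_root_.zpow_neg, zpow_natCast, Matrix.SpecialLinearGroup.SL2_inv_expl]
    have h := coe_B_pow m
    rw [Matrix.SpecialLinearGroup.coe_pow] at h
    ext i j
    fin_cases i <;> fin_cases j <;> simp [h] <;> push_cast <;> ring

lemma A_mem_gamma1 : A₃ ∈ CongruenceSubgroup.Gamma1 3 := by
  rw [CongruenceSubgroup.Gamma1_mem]
  refine ⟨?_, ?_, ?_⟩ <;> simp [A₃] <;> decide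

lemma B_mem_gamma1 : B₃ ∈ CongruenceSubgroup.Gamma1 3 := by
  rw [CongruenceSubgroup.Gamma1_mem]
  refine ⟨?_, ?_, ?_⟩ <;> simp [B₃] <;> decide

lemma key : ∀ k : ℕ, ∀ M : Matrix.SpecialLinearGroup (Fin 2) ℤ,
    M ∈ CongruenceSubgroup.Gamma1 3 →
    ((M : Matrix (Fin 2) (Fin 2) ℤ) 1 0).natAbs = k →
    M ∈ Subgroup.closure ({A₃, B₃} : Set (Matrix.SpecialLinearGroup (Fin 2) ℤ)) := by
  intro k
  induction k using Nat.strong_induction_on with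
  | _ k ih =>
  intro M hM hk
  have hAc : A₃ ∈ Subgroup.closure ({A₃, B₃} : Set (Matrix.SpecialLinearGroup (Fin 2) ℤ)) :=
    Subgroup.subset_closure (by simp)
  have hBc : B₃ ∈ Subgroup.closure ({A₃, B₃} : Set (Matrix.SpecialLinearGroup (Fin 2) ℤ)) :=
    Subgroup.subset_closure (by simp)
  set a := (M : Matrix (Fin 2) (Fin 2) ℤ) 0 0 with ha
  set b := (M : Matrix (Fin 2) (Fin 2) ℤ) 0 1 with hb
  set c := (M : Matrix (Fin 2) (Fin 2) ℤ) 1 0 with hc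
  set d := (M : Matrix (Fin 2) (Fin 2) ℤ) 1 1 with hd
  obtain ⟨ha1, hd1, hc0⟩ := (CongruenceSubgroup.Gamma1_mem 3 M).mp hM
  rw [← ha] at ha1
  rw [← hd] at hd1
  rw [← hc] at hc0
  have hdet : a * d - b * c = 1 := by
    have := M.2
    rwa [Matrix.det_fin_two] at this
  have hMeta : (M : Matrix (Fin 2) (Fin 2) ℤ) = !![a, b; c, d] := Matrix.eta_fin_two _
  by_cases hczero : c = 0
  · -- c = 0 : M = B₃ ^ b
    have had : a * d = 1 := by rw [hczero] at hdet; linarith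
    rcases Int.eq_one_or_neg_one_of_mul_eq_one' had with ⟨haa, hdd⟩ | ⟨haa, hdd⟩
    · have : M = B₃ ^ b := by
        apply Subtype.ext
        rw [coe_B_zpow, hMeta, hczero, haa, hdd]
      rw [this]
      exact zpow_mem hBc b
    · exfalso
      rw [haa] at ha1
      simp at ha1
      exact absurd ha1 (by decide)
  · -- c ≠ 0 : Euclidean reduction
    have hcpos : 0 < c.natAbs := Int.natAbs_pos.mpr hczero
    set r := Int.bmod a c.natAbs with hrdef
    have hdvd : (c : ℤ) ∣ r - a := Int.natAbs_dvd.mp Int.dvd_bmod_sub_self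
    obtain ⟨q, hq⟩ := hdvd
    have hr : r = a + c * q := by linarith
    have h2r : 2 * r.natAbs ≤ c.natAbs := by
      have h1 := Int.le_bmod (x := a) (m := c.natAbs) hcpos
      have h2 := Int.bmod_le (x := a) (m := c.natAbs) hcpos
      rw [← hrdef] at h1 h2
      omega
    have hr3 : ((r : ℤ) : ZMod 3) = 1 := by
      rw [hr]; push_cast; rw [ha1, hc0]; ring
    have hrne : r ≠ 0 := by
      intro h; rw [h] at hr3; simp at hr3
    have hmpos : 0 < (3 * r).natAbs := Int.natAbs_pos.mpr (by omega)
    set c' := Int.bmod c (3 * r).natAbs with hc'def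
    have hdvd2 : (3 * r : ℤ) ∣ c' - c := Int.natAbs_dvd.mp Int.dvd_bmod_sub_self
    obtain ⟨e, he⟩ := hdvd2
    have h2c' : 2 * c'.natAbs ≤ (3 * r).natAbs := by
      have h1 := Int.le_bmod (x := c) (m := (3 * r).natAbs) hmpos
      have h2 := Int.bmod_le (x := c) (m := (3 * r).natAbs) hmpos
      rw [← hc'def] at h1 h2
      omega
    have h3r : (3 * r).natAbs = 3 * r.natAbs := by
      rw [Int.natAbs_mul]; rfl
    have hlt : c'.natAbs < k := by omega
    set N := A₃ ^ (-e) * (B₃ ^ q * M) with hN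
    have hNmat : (N : Matrix (Fin 2) (Fin 2) ℤ)
        = !![1, 0; -3 * (-e), 1] * (!![1, q; 0, 1] * !![a, b; c, d]) := by
      rw [hN, Matrix.SpecialLinearGroup.coe_mul, Matrix.SpecialLinearGroup.coe_mul,
        coe_A_zpow, coe_B_zpow, hMeta]
    have hN10 : (N : Matrix (Fin 2) (Fin 2) ℤ) 1 0 = c' := by
      have hce : c' = c + 3 * r * e := by linarith
      rw [hNmat, hce, hr]
      simp [Matrix.mul_apply, Fin.sum_univ_two]
      ring
    have hNG : N ∈ CongruenceSubgroup.Gamma1 3 :=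
      mul_mem (zpow_mem A_mem_gamma1 _) (mul_mem (zpow_mem B_mem_gamma1 _) hM)
    have hNcl := ih c'.natAbs hlt N hNG (by rw [hN10])
    have hMeq : B₃ ^ (-q) * (A₃ ^ e * N) = M := by
      rw [hN]; group
    rw [← hMeq]
    exact mul_mem (zpow_mem hBc _) (mul_mem (zpow_mem hAc _) hNcl)

/-- `Γ₁(3)` is generated by `A = [[1,0],[-3,1]]` and `B = [[1,1],[0,1]]`. -/
theorem gamma1_three_generated :
    Subgroup.closure ({A₃, B₃} : Set (Matrix.SpecialLinearGroup (Fin 2) ℤ)) =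
      CongruenceSubgroup.Gamma1 3 := by
  apply le_antisymm
  · rw [Subgroup.closure_le]
    rintro x (rfl | rfl)
    · exact A_mem_gamma1
    · exact B_mem_gamma1
  · intro M hM
    exact key _ M hM rfl
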